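/- For two distinct groups T_j, T_k of three relatively-consecutive small items in a random permutation of n items (m small), the probability that both groups appear consecutively equals m(m−1)(m−2)(m−3)/(n(n−1)(n−2)(n−3)), and hence Cov(Y_σ^{(j)}, Y_σ^{(k)}) = m(m−1)(m−2)(m−3)/(n(n−1)(n−2)(n−3)) − m²(m−1)²/(n²(n−1)²). -/

import Mathlib

/-- The positions (in increasing order) of the small items (items with label `< m`)
in the arrangement given by the permutation `σ` of `n` items. -/
noncomputable def smallPositions (n m : ℕ) (σ : Equiv.Perm (Fin n)) : List ℕ :=
  ((Finset.univ.filter (fun p : Fin n => (σ p : ℕ) < m)).sort (· ≤ ·)).map Fin.val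

/-- The `i`-th group of three relatively-consecutive small items occupies three
consecutive positions of the permutation `σ`. -/
noncomputable def Triplet (n m i : ℕ) (σ : Equiv.Perm (Fin n)) : Prop :=
  (smallPositions n m σ).getD (3 * i + 1) 0 = (smallPositions n m σ).getD (3 * i) 0 + 1 ∧
  (smallPositions n m σ).getD (3 * i + 2) 0 = (smallPositions n m σ).getD (3 * i) 0 + 2

/-!
The small items of a uniformly random permutation occupy a uniformly random `m`-subset of the
`n` positions: `Equiv.Perm` acts transitively on `m`-subsets, so all fibres of
`σ ↦ σ⁻¹ • {0, …, m - 1}` have the size of a stabiliser. An `m`-subset of `{0, …, n - 1}` is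
encoded by its `m + 1` gaps, a composition of `n - m` into `m + 1` nonnegative parts. Asking that
the small items of ranks `b` and `b + 1` be adjacent for every `b ∈ B` forces `#B` of the gaps to
vanish, so stars and bars counts `C(n - t, m - t)` such subsets, `t = #B`, and the event has
probability `C(n - t, m - t) / C(n, m) = m(m-1)⋯(m-t+1) / (n(n-1)⋯(n-t+1))`. Two distinct
triplets give `t = 4`, a single one `t = 2`.
-/

open Finset
open scoped Nat Pointwise

theorem Nat.cast_descFactorial_four {R : Type*} [CommRing R] (a : ℕ) :
    (a.descFactorial 4 : R) = a * (a - 1) * (a - 2) * (a - 3) := by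
  rcases a with _ | _ | _ | a <;> simp [Nat.descFactorial_succ]
  ring

theorem Nat.choose_sub_mul_descFactorial {n m t : ℕ} (htm : t ≤ m) :
    (n - t).choose (m - t) * n.descFactorial t = n.choose m * m.descFactorial t := by
  rw [Nat.descFactorial_eq_factorial_mul_choose, Nat.descFactorial_eq_factorial_mul_choose,
    show n.choose m * (t ! * m.choose t) = t ! * (n.choose m * m.choose t) by ring,
    Nat.choose_mul htm]
  ring

theorem MulAction.card_subtype_smul_mul_card {G X : Type*} [Group G] [MulAction G X]
    [MulAction.IsPretransitive G X] (x : X) (P : X → Prop) :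
    Nat.card {g : G // P (g • x)} * Nat.card X = Nat.card {y : X // P y} * Nat.card G := by
  let horbit : orbit G x ≃ X := (Equiv.setCongr (orbit_eq_univ G x)).trans (Equiv.Set.univ X)
  have e : {g : G // P (g • x)} ≃ {y : orbit G x // P y} × stabilizer G x :=
    ((orbitProdStabilizerEquivGroup G x).symm.subtypeEquiv (q := fun p => P p.1)
      fun _ => Iff.rfl).trans (Equiv.prodSubtypeFstEquivSubtypeProd (p := fun y : orbit G x => P y))
  have e' : {y : orbit G x // P y} ≃ {y : X // P y} :=
    horbit.subtypeEquiv (p := fun y : orbit G x => P y) fun _ => Iff.rfl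
  rw [Nat.card_congr e, ← Nat.card_congr (orbitProdStabilizerEquivGroup G x), Nat.card_prod,
    Nat.card_prod, Nat.card_congr horbit, Nat.card_congr e']
  ring

theorem Equiv.Perm.card_subtype_smul_finset_mul_choose {α : Type*} [Fintype α] [DecidableEq α]
    (t : Finset α) (Q : Finset α → Prop) [DecidablePred Q] :
    Nat.card {σ : Equiv.Perm α // Q (σ • t)} * (Fintype.card α).choose #t =
      #{s ∈ powersetCard #t univ | Q s} * (Fintype.card α)! := by
  have := Set.powersetCard.isPretransitive (α := α) (n := #t)
  have h := MulAction.card_subtype_smul_mul_card (G := Equiv.Perm α)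
    (⟨t, rfl⟩ : Set.powersetCard α #t) (fun s => Q s)
  simp only [Set.powersetCard.coe_smul] at h
  rw [Set.powersetCard.card, Nat.card_perm, Nat.card_eq_fintype_card (α := α)] at h
  have e : {y : Set.powersetCard α #t // Q y} ≃
      {s // s ∈ ({s ∈ powersetCard #t univ | Q s} : Finset _)} :=
    (Equiv.subtypeSubtypeEquivSubtypeInter _ _).trans (Equiv.subtypeEquivRight fun s => by simp)
  rw [h, Nat.card_congr e, Nat.card_eq_fintype_card, Fintype.card_coe]

theorem Finset.filter_finsuppAntidiag_eq_zero {ι μ : Type*} [DecidableEq ι] [AddCommMonoid μ]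
    [HasAntidiagonal μ] [DecidableEq μ] (s t : Finset ι) (k : μ) :
    {g ∈ (finsuppAntidiag s k : Finset (ι →₀ μ)) | ∀ i ∈ t, g i = 0} =
      finsuppAntidiag (s \ t) k := by
  ext g
  simp only [mem_filter, mem_finsuppAntidiag]
  constructor
  · rintro ⟨⟨hsum, hsupp⟩, ht⟩
    have hsupp' : g.support ⊆ s \ t := fun i hi =>
      mem_sdiff.2 ⟨hsupp hi, fun hit => Finsupp.mem_support_iff.1 hi (ht i hit)⟩
    refine ⟨?_, hsupp'⟩
    rwa [sum_subset sdiff_subset fun i _ hi => Finsupp.notMem_support_iff.1 fun h => hi (hsupp' h)]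
  · rintro ⟨hsum, hsupp⟩
    refine ⟨⟨?_, hsupp.trans sdiff_subset⟩, fun i hit =>
      Finsupp.notMem_support_iff.1 fun h => (mem_sdiff.1 (hsupp h)).2 hit⟩
    rwa [← sum_subset sdiff_subset fun i _ hi => Finsupp.notMem_support_iff.1 fun h => hi (hsupp h)]

/-- The `m` points of `{0, …, n - 1}` with `g 0` free slots before the first point, `g (p + 1)`
between the points of ranks `p` and `p + 1`, and `g m` after the last one: `gapPos g p` is the
position of the point of rank `p`, and `gapPos g m = n` once the gaps sum to `n - m`. -/
def gapPos (g : ℕ →₀ ℕ) (p : ℕ) : ℕ := p + ∑ q ∈ range (p + 1), g q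

section gapPos

variable (g : ℕ →₀ ℕ)

theorem gapPos_zero : gapPos g 0 = g 0 := by simp [gapPos]

theorem gapPos_succ (p : ℕ) : gapPos g (p + 1) = gapPos g p + 1 + g (p + 1) := by
  simp only [gapPos, sum_range_succ _ (p + 1)]
  ring

theorem strictMono_gapPos : StrictMono (gapPos g) :=
  strictMono_nat_of_lt_succ fun p => by rw [gapPos_succ]; omega

theorem gapPos_of_mem_finsuppAntidiag {m s : ℕ} (hg : g ∈ finsuppAntidiag (range (m + 1)) s) :
    gapPos g m = m + s := by
  rw [gapPos, (mem_finsuppAntidiag.1 hg).1]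

theorem apply_eq_of_gapPos_eq {g' : ℕ →₀ ℕ} {m : ℕ} (h : ∀ p ≤ m, gapPos g p = gapPos g' p) :
    ∀ q ≤ m, g q = g' q
  | 0, _ => by simpa [gapPos_zero] using h 0 (Nat.zero_le m)
  | p + 1, hp => by
    have := h (p + 1) hp
    rw [gapPos_succ, gapPos_succ, h p (by omega)] at this
    omega

def gapSet (m : ℕ) : Finset ℕ := (range m).map ⟨gapPos g, (strictMono_gapPos g).injective⟩

theorem sort_gapSet (m : ℕ) : (gapSet g m).sort (· ≤ ·) = (List.range m).map (gapPos g) := by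
  rw [gapSet, ← ((strictMono_gapPos g).strictMonoOn _).map_finsetSort, sort_range]
  rfl

theorem getD_sort_gapSet {m p : ℕ} (hp : p < m) :
    ((gapSet g m).sort (· ≤ ·)).getD p 0 = gapPos g p := by
  simp [sort_gapSet, hp]

end gapPos

theorem injOn_gapSet (m s : ℕ) : Set.InjOn (gapSet · m) (finsuppAntidiag (range (m + 1)) s) := by
  intro g hg g' hg' h
  have hpos : ∀ p ≤ m, gapPos g p = gapPos g' p := by
    intro p hp
    rcases hp.lt_or_eq with hp | rfl
    · rw [← getD_sort_gapSet g hp, ← getD_sort_gapSet g' hp, show gapSet g m = gapSet g' m from h]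
    · rw [gapPos_of_mem_finsuppAntidiag g hg, gapPos_of_mem_finsuppAntidiag g' hg']
  ext q
  rcases le_or_gt q m with hq | hq
  · exact apply_eq_of_gapPos_eq g hpos q hq
  · have hs := (mem_finsuppAntidiag.1 hg).2
    have hs' := (mem_finsuppAntidiag.1 hg').2
    have hout : q ∉ range (m + 1) := by rw [mem_range]; omega
    rw [Finsupp.notMem_support_iff.1 fun h => hout (hs h),
      Finsupp.notMem_support_iff.1 fun h => hout (hs' h)]

theorem image_gapSet {m n : ℕ} (hmn : m ≤ n) :
    (finsuppAntidiag (range (m + 1)) (n - m)).image (gapSet · m) = powersetCard m (range n) := by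
  -- Both sides have `C(n, m)` elements, so injectivity is enough.
  refine eq_of_subset_of_card_le (fun T hT => ?_) ?_
  · obtain ⟨g, hg, rfl⟩ := mem_image.1 hT
    refine mem_powersetCard.2 ⟨fun x hx => ?_, by simp [gapSet]⟩
    obtain ⟨p, hp, rfl⟩ := mem_map.1 hx
    have := strictMono_gapPos g (mem_range.1 hp)
    rw [gapPos_of_mem_finsuppAntidiag g hg] at this
    simp only [Function.Embedding.coeFn_mk, mem_range]
    omega
  · rw [card_image_of_injOn (injOn_gapSet m _), card_finsuppAntidiag_nat_eq_choose,
      card_powersetCard, card_range, card_range, show m + 1 + (n - m) - 1 = n by omega,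
      Nat.choose_symm hmn]

abbrev ConsecutiveAt (l : List ℕ) (b : ℕ) : Prop := l.getD (b + 1) 0 = l.getD b 0 + 1

theorem card_filter_powersetCard_consecutiveAt {m n : ℕ} (hmn : m ≤ n) {B : Finset ℕ}
    (hB : ∀ b ∈ B, b + 1 < m) :
    #{T ∈ powersetCard m (range n) | ∀ b ∈ B, ConsecutiveAt (T.sort (· ≤ ·)) b} =
      (n - #B).choose (m - #B) := by
  have hcons (g : ℕ →₀ ℕ) : (∀ b ∈ B, ConsecutiveAt ((gapSet g m).sort (· ≤ ·)) b) ↔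
      ∀ i ∈ B.map (addRightEmbedding 1), g i = 0 := by
    simp only [forall_mem_map, addRightEmbedding_apply]
    refine forall₂_congr fun b hb => ?_
    rw [ConsecutiveAt, getD_sort_gapSet g (hB b hb), getD_sort_gapSet g (by linarith [hB b hb]),
      gapPos_succ]
    omega
  have hBm : #B ≤ m := by
    simpa using card_le_card (fun b hb => mem_range.2 (by linarith [hB b hb]) : B ⊆ range m)
  have hsub : B.map (addRightEmbedding 1) ⊆ range (m + 1) := fun i hi => by
    obtain ⟨b, hb, rfl⟩ := mem_map.1 hi
    simpa using (hB b hb).trans (Nat.lt_succ_self m)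
  rw [← image_gapSet hmn, filter_image,
    card_image_of_injOn ((injOn_gapSet m _).mono (coe_subset.2 (filter_subset _ _))),
    filter_congr fun g _ => hcons g, filter_finsuppAntidiag_eq_zero,
    card_finsuppAntidiag_nat_eq_choose, card_sdiff_of_subset hsub, card_map, card_range,
    show m + 1 - #B + (n - m) - 1 = n - #B by omega,
    ← Nat.choose_symm (by omega : m - #B ≤ n - #B)]
  congr 1
  omega

theorem smallPositions_eq_sort (n m : ℕ) (σ : Equiv.Perm (Fin n)) :
    smallPositions n m σ =
      ((σ⁻¹ • ({y | (y : ℕ) < m} : Finset (Fin n))).map Fin.valEmbedding).sort (· ≤ ·) := by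
  rw [smallPositions, ← (Fin.val_strictMono.strictMonoOn _).map_finsetSort]
  congr 3
  ext p
  simp [mem_inv_smul_finset_iff, Equiv.Perm.smul_def]

theorem card_perm_smallPositions_mul_choose {n m : ℕ} (hmn : m ≤ n) (Q : List ℕ → Prop)
    [DecidablePred Q] :
    Nat.card {σ : Equiv.Perm (Fin n) // Q (smallPositions n m σ)} * n.choose m =
      #{T ∈ powersetCard m (range n) | Q (T.sort (· ≤ ·))} * n ! := by
  set t : Finset (Fin n) := {y | (y : ℕ) < m}
  have ht : #t = m := by simp [t, Fin.card_filter_val_lt, hmn]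
  have e : {σ // Q (smallPositions n m σ)} ≃
      {σ : Equiv.Perm (Fin n) // Q (((σ • t).map Fin.valEmbedding).sort (· ≤ ·))} :=
    (Equiv.inv _).subtypeEquiv fun σ => by rw [smallPositions_eq_sort]; rfl
  have h := Equiv.Perm.card_subtype_smul_finset_mul_choose t
    (fun s => Q ((s.map Fin.valEmbedding).sort (· ≤ ·)))
  rw [Fintype.card_fin, ht] at h
  rw [Nat.card_congr e, h, ← Nat.Iio_eq_range, ← Fin.map_valEmbedding_univ, powersetCard_map,
    filter_map, card_map]
  rfl

theorem card_consecutiveAt_div_card_perm {n m : ℕ} (hmn : m ≤ n) {B : Finset ℕ}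
    (hB : ∀ b ∈ B, b + 1 < m) :
    (Nat.card {σ : Equiv.Perm (Fin n) // ∀ b ∈ B, ConsecutiveAt (smallPositions n m σ) b} : ℝ) /
        Nat.card (Equiv.Perm (Fin n)) = m.descFactorial #B / n.descFactorial #B := by
  have hBm : #B ≤ m := by
    simpa using card_le_card (fun b hb => mem_range.2 (by linarith [hB b hb]) : B ⊆ range m)
  have hcount := card_perm_smallPositions_mul_choose hmn (fun l => ∀ b ∈ B, ConsecutiveAt l b)
  rw [card_filter_powersetCard_consecutiveAt hmn hB] at hcount
  have hratio := Nat.choose_sub_mul_descFactorial (n := n) hBm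
  have hchoose : (n.choose m : ℝ) ≠ 0 := by exact_mod_cast (Nat.choose_pos hmn).ne'
  have hdesc : (n.descFactorial #B : ℝ) ≠ 0 := by
    exact_mod_cast (Nat.descFactorial_pos.2 (hBm.trans hmn)).ne'
  rw [Nat.card_perm, Nat.card_eq_fintype_card (α := Fin n), Fintype.card_fin,
    div_eq_div_iff (by positivity) hdesc]
  apply mul_right_cancel₀ hchoose
  have hcount' : _ = _ := congrArg (Nat.cast : ℕ → ℝ) hcount
  have hratio' : _ = _ := congrArg (Nat.cast : ℕ → ℝ) hratio
  push_cast at hcount' hratio'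
  linear_combination (n.descFactorial #B : ℝ) * hcount' + (n ! : ℝ) * hratio'

theorem triplet_iff_consecutiveAt (n m i : ℕ) (σ : Equiv.Perm (Fin n)) :
    Triplet n m i σ ↔
      ∀ b ∈ ({3 * i, 3 * i + 1} : Finset ℕ), ConsecutiveAt (smallPositions n m σ) b := by
  simp only [Triplet, mem_insert, mem_singleton, forall_eq_or_imp, forall_eq, ConsecutiveAt,
    show 3 * i + 1 + 1 = 3 * i + 2 from rfl]
  omega

/-- For two distinct triplet groups `T_j, T_k`, the probability that both appear
consecutively equals `m(m-1)(m-2)(m-3)/(n(n-1)(n-2)(n-3))`, and hence the covariance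
of the corresponding indicators equals this joint probability minus
`m²(m-1)²/(n²(n-1)²)`. -/
theorem triplet_pair_probability (n m j k : ℕ) (hmn : m ≤ n) (hjk : j ≠ k)
    (hj : 3 * j + 3 ≤ m) (hk : 3 * k + 3 ≤ m) :
    (Nat.card {σ : Equiv.Perm (Fin n) // Triplet n m j σ ∧ Triplet n m k σ} : ℝ) /
        (Nat.card (Equiv.Perm (Fin n)) : ℝ) =
      ((m : ℝ) * ((m : ℝ) - 1) * ((m : ℝ) - 2) * ((m : ℝ) - 3)) /
        ((n : ℝ) * ((n : ℝ) - 1) * ((n : ℝ) - 2) * ((n : ℝ) - 3)) ∧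
    (Nat.card {σ : Equiv.Perm (Fin n) // Triplet n m j σ ∧ Triplet n m k σ} : ℝ) /
          (Nat.card (Equiv.Perm (Fin n)) : ℝ) -
        ((Nat.card {σ : Equiv.Perm (Fin n) // Triplet n m j σ} : ℝ) /
            (Nat.card (Equiv.Perm (Fin n)) : ℝ)) *
          ((Nat.card {σ : Equiv.Perm (Fin n) // Triplet n m k σ} : ℝ) /
            (Nat.card (Equiv.Perm (Fin n)) : ℝ)) =
      ((m : ℝ) * ((m : ℝ) - 1) * ((m : ℝ) - 2) * ((m : ℝ) - 3)) /
          ((n : ℝ) * ((n : ℝ) - 1) * ((n : ℝ) - 2) * ((n : ℝ) - 3)) -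
        ((m : ℝ) ^ 2 * ((m : ℝ) - 1) ^ 2) / ((n : ℝ) ^ 2 * ((n : ℝ) - 1) ^ 2) := by
  have hpair (σ : Equiv.Perm (Fin n)) : Triplet n m j σ ∧ Triplet n m k σ ↔
      ∀ b ∈ ({3 * j, 3 * j + 1, 3 * k, 3 * k + 1} : Finset ℕ),
        ConsecutiveAt (smallPositions n m σ) b := by
    simp only [triplet_iff_consecutiveAt, mem_insert, mem_singleton, forall_eq_or_imp, forall_eq,
      and_assoc]
  have hcard : #({3 * j, 3 * j + 1, 3 * k, 3 * k + 1} : Finset ℕ) = 4 := by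
    grind [card_insert_of_notMem, card_pair]
  have hprob_pair := card_consecutiveAt_div_card_perm hmn
    (B := {3 * j, 3 * j + 1, 3 * k, 3 * k + 1})
    (by simp only [mem_insert, mem_singleton, forall_eq_or_imp, forall_eq]; omega)
  rw [← Nat.card_congr (Equiv.subtypeEquivRight hpair), hcard, Nat.cast_descFactorial_four,
    Nat.cast_descFactorial_four] at hprob_pair
  have hprob_single (i : ℕ) (hi : 3 * i + 3 ≤ m) :
      (Nat.card {σ : Equiv.Perm (Fin n) // Triplet n m i σ} : ℝ) /
        Nat.card (Equiv.Perm (Fin n)) = m * (m - 1) / (n * (n - 1)) := by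
    rw [Nat.card_congr (Equiv.subtypeEquivRight (triplet_iff_consecutiveAt n m i)),
      card_consecutiveAt_div_card_perm hmn
        (by simp only [mem_insert, mem_singleton, forall_eq_or_imp, forall_eq]; omega),
      card_pair (by omega),
      Nat.cast_descFactorial_two, Nat.cast_descFactorial_two]
  refine ⟨hprob_pair, ?_⟩
  rw [hprob_pair, hprob_single j hj, hprob_single k hk, div_mul_div_comm]
  ring
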